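/- arXiv:2403.19223 — 2 statements merged into one kernel-verified Lean document; each statement's English description precedes it below -/
import Mathlib

section
/- Under Assumptions (A1)–(A2), for every ε > 0 and every α ∈ ℝ there exist constants κ > 0 and C ≥ 0 such that U^{ε,α}(x) ≤ −κ|x|² + C for all x ∈ ℝ^d. In particular U^{ε,α}(x) → −∞ as |x| → ∞ and sup_{x} U^{ε,α}(x) < ∞. -/
set_option maxHeartbeats 1000000
set_option synthInstance.maxHeartbeats 1000000


open Filter MeasureTheory
open scoped RealInnerProductSpace

noncomputable section

/-- The Laplacian of `V : ℝ^d → ℝ` at `x`: the trace of the Hessian,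
computed as the sum of the second directional derivatives along the
standard orthonormal basis. -/
def laplacian {d : ℕ} (V : EuclideanSpace ℝ (Fin d) → ℝ) (x : EuclideanSpace ℝ (Fin d)) : ℝ :=
  ∑ i, fderiv ℝ (fderiv ℝ V) x (EuclideanSpace.single i 1) (EuclideanSpace.single i 1)

/-- The divergence `∇·b` of a vector field `b : ℝ^d → ℝ^d` at `x`:
the trace of the Jacobian. -/
def diverg {d : ℕ} (b : EuclideanSpace ℝ (Fin d) → EuclideanSpace ℝ (Fin d))
    (x : EuclideanSpace ℝ (Fin d)) : ℝ :=
  ∑ i, fderiv ℝ b x (EuclideanSpace.single i 1) i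

lemma abs_laplacian_le {d : ℕ} (V : EuclideanSpace ℝ (Fin d) → ℝ) (x : EuclideanSpace ℝ (Fin d)) :
    |laplacian V x| ≤ d * ‖fderiv ℝ (fderiv ℝ V) x‖ := by
  calc |laplacian V x| ≤ ∑ i : Fin d, |fderiv ℝ (fderiv ℝ V) x (EuclideanSpace.single i 1) (EuclideanSpace.single i 1)| :=
        Finset.abs_sum_le_sum_abs _ _
    _ ≤ ∑ _i : Fin d, ‖fderiv ℝ (fderiv ℝ V) x‖ := by
        apply Finset.sum_le_sum
        intro i _
        rw [← Real.norm_eq_abs]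
        calc ‖fderiv ℝ (fderiv ℝ V) x (EuclideanSpace.single i 1) (EuclideanSpace.single i 1)‖
            ≤ ‖fderiv ℝ (fderiv ℝ V) x (EuclideanSpace.single i 1)‖ * ‖(EuclideanSpace.single i (1:ℝ))‖ :=
              ContinuousLinearMap.le_opNorm _ _
          _ ≤ ‖fderiv ℝ (fderiv ℝ V) x‖ * ‖(EuclideanSpace.single i (1:ℝ))‖ * ‖(EuclideanSpace.single i (1:ℝ))‖ := by
              gcongr; exact ContinuousLinearMap.le_opNorm _ _
          _ = ‖fderiv ℝ (fderiv ℝ V) x‖ := by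
              rw [EuclideanSpace.norm_single]; simp
    _ = d * ‖fderiv ℝ (fderiv ℝ V) x‖ := by simp [Finset.sum_const, Finset.card_univ]

lemma coord_abs_le_norm {d : ℕ} (v : EuclideanSpace ℝ (Fin d)) (i : Fin d) : |v i| ≤ ‖v‖ := by
  have h : v i = ⟪EuclideanSpace.single i (1:ℝ), v⟫ := by
    rw [EuclideanSpace.inner_single_left]; simp
  rw [h]
  calc |⟪EuclideanSpace.single i (1:ℝ), v⟫| ≤ ‖EuclideanSpace.single i (1:ℝ)‖ * ‖v‖ :=
        abs_real_inner_le_norm _ _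
    _ = ‖v‖ := by rw [EuclideanSpace.norm_single]; simp

lemma abs_diverg_le {d : ℕ} (b : EuclideanSpace ℝ (Fin d) → EuclideanSpace ℝ (Fin d))
    (x : EuclideanSpace ℝ (Fin d)) : |diverg b x| ≤ d * ‖fderiv ℝ b x‖ := by
  calc |diverg b x| ≤ ∑ i : Fin d, |fderiv ℝ b x (EuclideanSpace.single i 1) i| :=
        Finset.abs_sum_le_sum_abs _ _
    _ ≤ ∑ _i : Fin d, ‖fderiv ℝ b x‖ := by
        apply Finset.sum_le_sum
        intro i _
        calc |fderiv ℝ b x (EuclideanSpace.single i 1) i| ≤ ‖fderiv ℝ b x (EuclideanSpace.single i 1)‖ :=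
              coord_abs_le_norm _ _
          _ ≤ ‖fderiv ℝ b x‖ * ‖(EuclideanSpace.single i (1:ℝ))‖ := ContinuousLinearMap.le_opNorm _ _
          _ = ‖fderiv ℝ b x‖ := by rw [EuclideanSpace.norm_single]; simp
    _ = d * ‖fderiv ℝ b x‖ := by simp [Finset.sum_const, Finset.card_univ]

lemma continuous_gradient' {d : ℕ} {V : EuclideanSpace ℝ (Fin d) → ℝ} (hV : ContDiff ℝ (⊤ : ℕ∞) V) :
    Continuous (gradient V) := by
  have h1 : Continuous (fderiv ℝ V) := hV.continuous_fderiv (by simp)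
  exact (InnerProductSpace.toDual ℝ _).symm.continuous.comp h1

lemma continuous_fderiv2 {d : ℕ} {V : EuclideanSpace ℝ (Fin d) → ℝ} (hV : ContDiff ℝ (⊤ : ℕ∞) V) :
    Continuous (fderiv ℝ (fderiv ℝ V)) :=
  (hV.fderiv_right (m := (⊤ : ℕ∞)) (by simp)).continuous_fderiv (by simp)

/-- Assumptions (A1)–(A2) of the paper: `V` is `C^∞` with
`⟪x, H₀ ∇V(x)⟫ ≥ ‖x‖²` for large `‖x‖` (for some symmetric positive-definite `H₀`)
and `‖D²V(x)‖ = o(‖∇V(x)‖)` as `‖x‖ → ∞`; the vector field `b` is `C^∞` and bounded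
in `C¹`, and `⟪b, ∇V⟫ ≤ c‖∇V‖²` for some constant `0 < c < 1/2`. -/
structure Assumptions {d : ℕ} (V : EuclideanSpace ℝ (Fin d) → ℝ)
    (b : EuclideanSpace ℝ (Fin d) → EuclideanSpace ℝ (Fin d)) : Prop where
  smooth_V : ContDiff ℝ (⊤ : ℕ∞) V
  coercive : ∃ (H₀ : EuclideanSpace ℝ (Fin d) →L[ℝ] EuclideanSpace ℝ (Fin d)) (R₀ : ℝ),
    0 ≤ R₀ ∧ IsSelfAdjoint H₀ ∧ (∀ x : EuclideanSpace ℝ (Fin d), x ≠ 0 → 0 < ⟪x, H₀ x⟫) ∧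
      ∀ x : EuclideanSpace ℝ (Fin d), R₀ ≤ ‖x‖ → ‖x‖ ^ 2 ≤ ⟪x, H₀ (gradient V x)⟫
  hessian_little_o : ∀ δ > (0 : ℝ), ∃ Rδ : ℝ, ∀ x : EuclideanSpace ℝ (Fin d),
    Rδ ≤ ‖x‖ → ‖fderiv ℝ (fderiv ℝ V) x‖ ≤ δ * ‖gradient V x‖
  smooth_b : ContDiff ℝ (⊤ : ℕ∞) b
  bounded_b : ∃ B : ℝ, ∀ x : EuclideanSpace ℝ (Fin d), ‖b x‖ + ‖fderiv ℝ b x‖ ≤ B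
  b_grad_V : ∃ c : ℝ, 0 < c ∧ c < 1 / 2 ∧
    ∀ x : EuclideanSpace ℝ (Fin d), ⟪b x, gradient V x⟫ ≤ c * ‖gradient V x‖ ^ 2

/-- The potential `U^{ε,α}` appearing in the Feynman–Kac semigroup:
`U^{ε,α} = −‖∇V‖²/(4ε) + ⟪b, ∇V⟫/(2ε) − α(1−α)‖b‖²/ε + ΔV/2 − α ∇·b`. -/
def Upot {d : ℕ} (V : EuclideanSpace ℝ (Fin d) → ℝ)
    (b : EuclideanSpace ℝ (Fin d) → EuclideanSpace ℝ (Fin d)) (ε α : ℝ)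
    (x : EuclideanSpace ℝ (Fin d)) : ℝ :=
  -(1 / (4 * ε)) * ‖gradient V x‖ ^ 2 + (1 / (2 * ε)) * ⟪b x, gradient V x⟫
    - (α * (1 - α) / ε) * ‖b x‖ ^ 2 + (1 / 2) * laplacian V x - α * diverg b x

lemma continuous_Upot {d : ℕ} {V : EuclideanSpace ℝ (Fin d) → ℝ}
    {b : EuclideanSpace ℝ (Fin d) → EuclideanSpace ℝ (Fin d)}
    (hV : ContDiff ℝ (⊤ : ℕ∞) V) (hb : ContDiff ℝ (⊤ : ℕ∞) b) (ε α : ℝ) :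
    Continuous (Upot V b ε α) := by
  have hg : Continuous (gradient V) := continuous_gradient' hV
  have hf2 : Continuous (fderiv ℝ (fderiv ℝ V)) := continuous_fderiv2 hV
  have hdb : Continuous (fderiv ℝ b) := hb.continuous_fderiv (by simp)
  have hbc : Continuous b := hb.continuous
  have hlap : Continuous (laplacian V) := by
    apply continuous_finset_sum
    intro i _
    exact (hf2.clm_apply continuous_const).clm_apply continuous_const
  have hdiv : Continuous (diverg b) := by
    apply continuous_finset_sum
    intro i _
    exact (EuclideanSpace.proj i : EuclideanSpace ℝ (Fin d) →L[ℝ] ℝ).continuous.comp (hdb.clm_apply continuous_const)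
  exact ((((continuous_const.mul (hg.norm.pow 2)).add
      (continuous_const.mul (hbc.inner hg))).sub
      (continuous_const.mul (hbc.norm.pow 2))).add
      (continuous_const.mul hlap)).sub (continuous_const.mul hdiv)

/-- Under Assumptions (A1)–(A2), for every `ε > 0` and `α ∈ ℝ` the Feynman–Kac
potential `U^{ε,α}` satisfies a quadratic upper bound `U^{ε,α}(x) ≤ −κ‖x‖² + C`
with `κ > 0`; in particular `U^{ε,α}(x) → −∞` as `‖x‖ → ∞` and `U^{ε,α}` is
bounded above. -/
theorem Upot_quadratic_upper_bound {d : ℕ} (V : EuclideanSpace ℝ (Fin d) → ℝ)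
    (b : EuclideanSpace ℝ (Fin d) → EuclideanSpace ℝ (Fin d)) (hA : Assumptions V b)
    (ε α : ℝ) (hε : 0 < ε) :
    (∃ κ > (0 : ℝ), ∃ C ≥ (0 : ℝ), ∀ x : EuclideanSpace ℝ (Fin d),
        Upot V b ε α x ≤ -κ * ‖x‖ ^ 2 + C) ∧
      Tendsto (Upot V b ε α) (comap norm atTop) atBot ∧
      BddAbove (Set.range (Upot V b ε α)) := by
  obtain ⟨H₀, R₀, hR₀, _, _, hcoer⟩ := hA.coercive
  obtain ⟨B, hB⟩ := hA.bounded_b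
  obtain ⟨c, hc0, hc2, hcV⟩ := hA.b_grad_V
  set M : ℝ := ‖H₀‖ + 1 with hM
  have hM1 : 1 ≤ M := by rw [hM]; linarith [norm_nonneg H₀]
  set κ₀ : ℝ := (1 - 2 * c) / (8 * ε) with hκ₀
  have hκ₀pos : 0 < κ₀ := by
    rw [hκ₀]; apply div_pos (by linarith) (by positivity)
  set κ : ℝ := κ₀ / M ^ 2 with hκ
  have hκpos : 0 < κ := by rw [hκ]; positivity
  have hBnn : 0 ≤ B := le_trans (by positivity) (hB 0)
  set δ : ℝ := 2 * κ₀ / (d + 1) with hδ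
  have hδpos : 0 < δ := by rw [hδ]; positivity
  obtain ⟨Rδ, hRδ⟩ := hA.hessian_little_o δ hδpos
  set R : ℝ := max (max R₀ Rδ) 1 with hR
  set C₀ : ℝ := |α * (1 - α)| / ε * B ^ 2 + κ₀ + |α| * d * B with hC₀
  have hC₀nn : 0 ≤ C₀ := by rw [hC₀]; positivity
  have hfar : ∀ x : EuclideanSpace ℝ (Fin d), R ≤ ‖x‖ →
      Upot V b ε α x ≤ -κ * ‖x‖ ^ 2 + C₀ := by
    intro x hx
    set G : ℝ := ‖gradient V x‖ with hG
    have hGnn : 0 ≤ G := norm_nonneg _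
    have hx1 : 1 ≤ ‖x‖ := le_trans (le_max_right _ _) hx
    have hxR₀ : R₀ ≤ ‖x‖ := le_trans (le_trans (le_max_left _ _) (le_max_left _ _)) hx
    have hxRδ : Rδ ≤ ‖x‖ := le_trans (le_trans (le_max_right _ _) (le_max_left _ _)) hx
    -- lower bound on the gradient
    have hxle : ‖x‖ ≤ M * G := by
      have h1 : ‖x‖ ^ 2 ≤ ⟪x, H₀ (gradient V x)⟫ := hcoer x hxR₀
      have h2 : ⟪x, H₀ (gradient V x)⟫ ≤ ‖x‖ * (‖H₀‖ * G) := by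
        calc ⟪x, H₀ (gradient V x)⟫ ≤ ‖x‖ * ‖H₀ (gradient V x)‖ := real_inner_le_norm _ _
          _ ≤ ‖x‖ * (‖H₀‖ * G) := by gcongr; exact H₀.le_opNorm _
      have hxpos : (0:ℝ) < ‖x‖ := lt_of_lt_of_le one_pos hx1
      have h3 : ‖x‖ * ‖x‖ ≤ ‖x‖ * (M * G) := by nlinarith [norm_nonneg H₀]
      exact le_of_mul_le_mul_left h3 hxpos
    -- individual bounds
    have hb1 : (1 / (2 * ε)) * ⟪b x, gradient V x⟫ ≤ (c / (2 * ε)) * G ^ 2 := by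
      have h := hcV x
      have h2 : (0:ℝ) < 1 / (2 * ε) := by positivity
      calc (1 / (2 * ε)) * ⟪b x, gradient V x⟫ ≤ (1 / (2 * ε)) * (c * G ^ 2) :=
            (mul_le_mul_iff_right₀ h2).mpr h
        _ = (c / (2 * ε)) * G ^ 2 := by ring
    have hbx : ‖b x‖ ≤ B := le_trans (le_add_of_nonneg_right (norm_nonneg _)) (hB x)
    have hdbx : ‖fderiv ℝ b x‖ ≤ B := le_trans (le_add_of_nonneg_left (norm_nonneg _)) (hB x)
    have hb2 : -(α * (1 - α) / ε) * ‖b x‖ ^ 2 ≤ |α * (1 - α)| / ε * B ^ 2 := by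
      have h1 : -(α * (1 - α)) ≤ |α * (1 - α)| := neg_le_abs _
      have h2 : ‖b x‖ ^ 2 ≤ B ^ 2 := by nlinarith [norm_nonneg (b x)]
      have h3 : (0:ℝ) ≤ |α * (1 - α)| := abs_nonneg _
      have h4 : ‖b x‖ ^ 2 ≥ 0 := by positivity
      have h5 : -(α * (1 - α) / ε) * ‖b x‖ ^ 2 ≤ |α * (1 - α)| / ε * ‖b x‖ ^ 2 := by
        apply mul_le_mul_of_nonneg_right _ h4
        rw [← neg_div]
        gcongr
      refine h5.trans ?_
      exact mul_le_mul_of_nonneg_left h2 (by positivity)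
    have hlapb : (1 / 2) * laplacian V x ≤ κ₀ * G ^ 2 + κ₀ := by
      have h1 : |laplacian V x| ≤ d * ‖fderiv ℝ (fderiv ℝ V) x‖ := abs_laplacian_le V x
      have h2 : ‖fderiv ℝ (fderiv ℝ V) x‖ ≤ δ * G := hRδ x hxRδ
      have h3 : laplacian V x ≤ d * (δ * G) :=
        le_trans (le_abs_self _) (h1.trans (by gcongr))
      have hfrac : (d : ℝ) / (d + 1) ≤ 1 := by
        rw [div_le_one (by positivity)]; linarith
      have hdd : (d : ℝ) * δ ≤ 2 * κ₀ := by
        calc (d : ℝ) * δ = (2 * κ₀) * ((d : ℝ) / (d + 1)) := by rw [hδ]; ring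
          _ ≤ (2 * κ₀) * 1 := mul_le_mul_of_nonneg_left hfrac (by positivity)
          _ = 2 * κ₀ := mul_one _
      have h4 : (d : ℝ) * (δ * G) ≤ 2 * κ₀ * G := by
        rw [← mul_assoc]
        exact mul_le_mul_of_nonneg_right hdd hGnn
      have h5 : G ≤ G ^ 2 + 1 := by nlinarith
      nlinarith
    have hdivb : -(α * diverg b x) ≤ |α| * d * B := by
      have h1 : |diverg b x| ≤ d * ‖fderiv ℝ b x‖ := abs_diverg_le b x
      calc -(α * diverg b x) ≤ |α * diverg b x| := neg_le_abs _
        _ = |α| * |diverg b x| := abs_mul _ _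
        _ ≤ |α| * (d * B) := by
            apply mul_le_mul_of_nonneg_left _ (abs_nonneg α)
            exact h1.trans (by gcongr)
        _ = |α| * d * B := by ring
    -- combine
    have hcomb : Upot V b ε α x ≤ -κ₀ * G ^ 2 + C₀ := by
      have hε4 : -(1 / (4 * ε)) * G ^ 2 + (c / (2 * ε)) * G ^ 2 + κ₀ * G ^ 2 = -κ₀ * G ^ 2 := by
        rw [hκ₀]; field_simp; ring
      simp only [Upot]
      rw [← hG, hC₀]
      nlinarith [hb1, hb2, hlapb, hdivb, hε4]
    have hGx : κ * ‖x‖ ^ 2 ≤ κ₀ * G ^ 2 := by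
      have h1 : ‖x‖ ^ 2 ≤ M ^ 2 * G ^ 2 := by nlinarith [norm_nonneg x]
      calc κ * ‖x‖ ^ 2 ≤ κ * (M ^ 2 * G ^ 2) := by
            exact mul_le_mul_of_nonneg_left h1 hκpos.le
        _ = κ₀ * G ^ 2 := by rw [hκ]; field_simp
    linarith
  -- near region: compact bound
  have hcont : Continuous (fun x : EuclideanSpace ℝ (Fin d) => Upot V b ε α x + κ * ‖x‖ ^ 2) :=
    (continuous_Upot hA.smooth_V hA.smooth_b ε α).add
      (continuous_const.mul (continuous_norm.pow 2))
  obtain ⟨C₁, hC₁⟩ := (isCompact_closedBall (0 : EuclideanSpace ℝ (Fin d)) R).exists_bound_of_continuousOn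
    hcont.continuousOn
  set C : ℝ := max C₀ (max C₁ 0) with hCdef
  have hCnn : 0 ≤ C := le_trans (le_max_right _ _) (le_max_right _ _)
  have hbound : ∀ x : EuclideanSpace ℝ (Fin d), Upot V b ε α x ≤ -κ * ‖x‖ ^ 2 + C := by
    intro x
    rcases le_or_gt R ‖x‖ with h | h
    · have := hfar x h
      have hC₀C : C₀ ≤ C := le_max_left _ _
      linarith
    · have hxball : x ∈ Metric.closedBall (0 : EuclideanSpace ℝ (Fin d)) R := by
        simp [Metric.mem_closedBall, dist_zero_right]; linarith
      have h1 := hC₁ x hxball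
      have h2 : Upot V b ε α x + κ * ‖x‖ ^ 2 ≤ C₁ := le_trans (le_abs_self _) h1
      have hC₁C : C₁ ≤ C := le_trans (le_max_left _ _) (le_max_right _ _)
      linarith
  refine ⟨⟨κ, hκpos, C, hCnn, hbound⟩, ?_, ?_⟩
  · -- tendsto atBot
    have h1 : Tendsto (fun x : EuclideanSpace ℝ (Fin d) => -κ * ‖x‖ ^ 2 + C)
        (comap norm atTop) atBot := by
      have hn : Tendsto (norm : EuclideanSpace ℝ (Fin d) → ℝ) (comap norm atTop) atTop :=
        tendsto_comap
      have hq : Tendsto (fun t : ℝ => -κ * t ^ 2 + C) atTop atBot := by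
        apply tendsto_atBot_add_const_right
        apply Tendsto.const_mul_atTop_of_neg (by linarith : -κ < 0)
        exact tendsto_pow_atTop (by norm_num)
      exact hq.comp hn
    exact tendsto_atBot_mono hbound h1
  · refine ⟨C, ?_⟩
    rintro y ⟨x, rfl⟩
    have := hbound x
    nlinarith [norm_nonneg x, sq_nonneg ‖x‖]
end
end

section
/- Under Assumptions (A1)–(A2), fix ε > 0 and α ∈ ℝ. Then there exists θ₀ > 0 such that for every θ ∈ (0, θ₀) there exist constants a > 0 and C ≥ 0 with, for all x ∈ ℝ^d: ( ε(2θd + 4θ²|x|²) + 2θ(1 − 2α)⟨b(x), x⟩ + U^{ε,α}(x) ) · e^{θ|x|²} ≤ −a e^{θ|x|²} + C. (Since for W(x) = e^{θ|x|²} one has ∇W(x) = 2θ x W(x) and ΔW(x) = (2θd + 4θ²|x|²)W(x), the left-hand side equals εΔW(x) + (1 − 2α)⟨b(x), ∇W(x)⟩ + U^{ε,α}(x)W(x); thus W is a Lyapunov function for the Feynman–Kac generator ℒ^{ε,α} + U^{ε,α}.) -/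
open Filter MeasureTheory
open scoped RealInnerProductSpace

noncomputable section

set_option maxHeartbeats 1000000 in
/-- **Lyapunov property of `W(x) = exp(θ‖x‖²)` for the Feynman–Kac generator.**
Under Assumptions (A1)–(A2), for fixed `ε > 0` and `α ∈ ℝ` there is `θ₀ > 0` such
that for every `θ ∈ (0, θ₀)` there are constants `a > 0` and `C ≥ 0` with
`(ε(2θd + 4θ²‖x‖²) + 2θ(1−2α)⟪b x, x⟫ + U^{ε,α}(x)) e^{θ‖x‖²} ≤ −a e^{θ‖x‖²} + C`
for all `x`; the left-hand side equals `εΔW + (1−2α)⟪b, ∇W⟫ + U^{ε,α} W` at `x`. -/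
theorem lyapunov_function_FK_generator {d : ℕ} (V : EuclideanSpace ℝ (Fin d) → ℝ)
    (b : EuclideanSpace ℝ (Fin d) → EuclideanSpace ℝ (Fin d)) (hA : Assumptions V b)
    (ε α : ℝ) (hε : 0 < ε) :
    ∃ θ₀ > (0 : ℝ), ∀ θ : ℝ, θ ∈ Set.Ioo 0 θ₀ →
      ∃ a > (0 : ℝ), ∃ C ≥ (0 : ℝ), ∀ x : EuclideanSpace ℝ (Fin d),
        (ε * (2 * θ * d + 4 * θ ^ 2 * ‖x‖ ^ 2) + 2 * θ * (1 - 2 * α) * ⟪b x, x⟫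
            + Upot V b ε α x) * Real.exp (θ * ‖x‖ ^ 2)
          ≤ -a * Real.exp (θ * ‖x‖ ^ 2) + C := by
  obtain ⟨H₀, R₀, hR₀0, -, -, hcoer⟩ := hA.coercive
  obtain ⟨B, hB⟩ := hA.bounded_b
  obtain ⟨c, hc0, hc2, hbV⟩ := hA.b_grad_V
  obtain ⟨R₁, hR₁⟩ := hA.hessian_little_o 1 one_pos
  have hBb : ∀ x, ‖b x‖ ≤ B := fun x =>
    le_trans (le_add_of_nonneg_right (norm_nonneg _)) (hB x)
  have hBd : ∀ x, ‖fderiv ℝ b x‖ ≤ B := fun x =>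
    le_trans (le_add_of_nonneg_left (norm_nonneg _)) (hB x)
  have hB0 : 0 ≤ B := le_trans (norm_nonneg _) (hBb 0)
  set K : ℝ := ‖H₀‖ + 1 with hKdef
  have hK0 : (0 : ℝ) < K := by positivity
  have hcc : (0 : ℝ) < 1 - 2 * c := by linarith only [hc2]
  refine ⟨min 1 ((1 - 2 * c) / (32 * ε ^ 2 * K ^ 2)), by positivity, ?_⟩
  rintro θ ⟨hθ0, hθ1⟩
  set m : ℝ := (1 - 2 * c) / (8 * ε) with hmdef
  have hm0 : (0 : ℝ) < m := by positivity
  have hθlt1 : θ < 1 := lt_of_lt_of_le hθ1 (min_le_left _ _)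
  have hθlt2 : θ < (1 - 2 * c) / (32 * ε ^ 2 * K ^ 2) := lt_of_lt_of_le hθ1 (min_le_right _ _)
  have hcoef : 4 * ε * θ ^ 2 * K ^ 2 ≤ m := by
    have h1 : θ * (32 * ε ^ 2 * K ^ 2) ≤ 1 - 2 * c := by
      rw [← le_div_iff₀ (by positivity)]; exact hθlt2.le
    have h2 : θ ^ 2 ≤ θ := by nlinarith only [hθ0, hθlt1]
    have h3 : θ ^ 2 * (32 * ε ^ 2 * K ^ 2) ≤ θ * (32 * ε ^ 2 * K ^ 2) :=
      mul_le_mul_of_nonneg_right h2 (by positivity)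
    rw [hmdef, le_div_iff₀ (by positivity)]
    nlinarith only [h1, h3]
  set L : ℝ := 2 * θ * |1 - 2 * α| * B * K + d / 2 with hLdef
  have hL0 : (0 : ℝ) ≤ L := by
    rw [hLdef]
    have h1 : (0:ℝ) ≤ 2 * θ * |1 - 2 * α| * B * K :=
      mul_nonneg (mul_nonneg (mul_nonneg (by positivity) (abs_nonneg _)) hB0) hK0.le
    have h2 : (0:ℝ) ≤ (d:ℝ) / 2 := by positivity
    exact add_nonneg h1 h2
  set M : ℝ := 2 * ε * θ * d + |α * (1 - α)| / ε * B ^ 2 + |α| * d * B with hMdef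
  have hM0 : (0 : ℝ) ≤ M := by
    rw [hMdef]
    have h1 : (0:ℝ) ≤ 2 * ε * θ * d := by positivity
    have h2 : (0:ℝ) ≤ |α * (1 - α)| / ε * B ^ 2 := by positivity
    have h3 : (0:ℝ) ≤ |α| * d * B :=
      mul_nonneg (mul_nonneg (abs_nonneg _) (by positivity)) hB0
    exact add_nonneg (add_nonneg h1 h2) h3
  set R : ℝ := max (max R₀ R₁) (max 1 (K * max 1 ((L + M + 2) / m))) with hRdef
  -- far-field bound
  have hfar : ∀ x : EuclideanSpace ℝ (Fin d), R ≤ ‖x‖ →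
      ε * (2 * θ * d + 4 * θ ^ 2 * ‖x‖ ^ 2) + 2 * θ * (1 - 2 * α) * ⟪b x, x⟫
        + Upot V b ε α x ≤ -1 := by
    intro x hx
    have hxR₀ : R₀ ≤ ‖x‖ := le_trans (le_trans (le_max_left _ _) (le_max_left _ _)) hx
    have hxR₁ : R₁ ≤ ‖x‖ := le_trans (le_trans (le_max_right _ _) (le_max_left _ _)) hx
    have hx1 : (1 : ℝ) ≤ ‖x‖ :=
      le_trans (le_trans (le_max_left _ _) (le_max_right _ _)) hx
    have hxK : K * max 1 ((L + M + 2) / m) ≤ ‖x‖ :=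
      le_trans (le_trans (le_max_right _ _) (le_max_right _ _)) hx
    set g : ℝ := ‖gradient V x‖ with hgdef
    have hg0 : (0 : ℝ) ≤ g := norm_nonneg _
    have hxg : ‖x‖ ≤ K * g := by
      have h1 : ‖x‖ ^ 2 ≤ ⟪x, H₀ (gradient V x)⟫ := hcoer x hxR₀
      have h2 : ⟪x, H₀ (gradient V x)⟫ ≤ ‖x‖ * ‖H₀ (gradient V x)‖ :=
        real_inner_le_norm _ _
      have h3 : ‖H₀ (gradient V x)‖ ≤ ‖H₀‖ * g := H₀.le_opNorm _
      have hxpos : (0 : ℝ) < ‖x‖ := lt_of_lt_of_le one_pos hx1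
      have h4 : ‖x‖ * ‖H₀ (gradient V x)‖ ≤ ‖x‖ * (‖H₀‖ * g) :=
        mul_le_mul_of_nonneg_left h3 (norm_nonneg x)
      have h5 : ‖x‖ ^ 2 ≤ ‖x‖ * (‖H₀‖ * g) := le_trans h1 (le_trans h2 h4)
      have h6 : ‖x‖ * ‖x‖ ≤ ‖H₀‖ * g * ‖x‖ := by nlinarith only [h5]
      have h7 : ‖x‖ ≤ ‖H₀‖ * g := le_of_mul_le_mul_right h6 hxpos
      show ‖x‖ ≤ (‖H₀‖ + 1) * g
      linarith only [h7, hg0]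
    have hgbig : max 1 ((L + M + 2) / m) ≤ g :=
      le_of_mul_le_mul_left (le_trans hxK hxg) hK0
    have hg1 : (1 : ℝ) ≤ g := le_trans (le_max_left _ _) hgbig
    have hg2 : L + M + 2 ≤ m * g := by
      have h := le_trans (le_max_right _ _) hgbig
      rw [div_le_iff₀ hm0] at h
      linarith only [h]
    -- component bounds
    have hlap : laplacian V x ≤ d * g := by
      have hhess : ‖fderiv ℝ (fderiv ℝ V) x‖ ≤ 1 * g := hR₁ x hxR₁
      unfold laplacian
      calc ∑ i, fderiv ℝ (fderiv ℝ V) x (EuclideanSpace.single i 1) (EuclideanSpace.single i 1)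
          ≤ ∑ _i : Fin d, g := by
            refine Finset.sum_le_sum fun i _ => ?_
            have h1 : ‖fderiv ℝ (fderiv ℝ V) x (EuclideanSpace.single i 1)
                (EuclideanSpace.single i 1)‖
                ≤ ‖fderiv ℝ (fderiv ℝ V) x‖ * ‖(EuclideanSpace.single i (1:ℝ))‖
                  * ‖(EuclideanSpace.single i (1:ℝ))‖ :=
              ContinuousLinearMap.le_opNorm₂ _ _ _
            rw [EuclideanSpace.norm_single, norm_one] at h1
            have h2 : fderiv ℝ (fderiv ℝ V) x (EuclideanSpace.single i 1)
                (EuclideanSpace.single i 1)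
                ≤ ‖fderiv ℝ (fderiv ℝ V) x (EuclideanSpace.single i 1)
                    (EuclideanSpace.single i 1)‖ := le_abs_self _
            linarith only [h1, h2, hhess]
        _ = d * g := by simp [Finset.sum_const, Finset.card_univ, nsmul_eq_mul]
    have hdiv : |diverg b x| ≤ d * B := by
      unfold diverg
      calc |∑ i, fderiv ℝ b x (EuclideanSpace.single i 1) i|
          ≤ ∑ i, |fderiv ℝ b x (EuclideanSpace.single i 1) i| := Finset.abs_sum_le_sum_abs _ _
        _ ≤ ∑ _i : Fin d, B := by
            refine Finset.sum_le_sum fun i _ => ?_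
            have h0 : (fderiv ℝ b x (EuclideanSpace.single i 1)) i
                = ⟪EuclideanSpace.single i (1:ℝ), fderiv ℝ b x (EuclideanSpace.single i 1)⟫ := by
              rw [EuclideanSpace.inner_single_left]; simp
            rw [h0]
            calc |⟪EuclideanSpace.single i (1:ℝ), fderiv ℝ b x (EuclideanSpace.single i 1)⟫|
                ≤ ‖EuclideanSpace.single i (1:ℝ)‖ * ‖fderiv ℝ b x (EuclideanSpace.single i 1)‖ :=
                  abs_real_inner_le_norm _ _
              _ ≤ B := by
                  rw [EuclideanSpace.norm_single, norm_one, one_mul]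
                  have h1 : ‖fderiv ℝ b x (EuclideanSpace.single i 1)‖
                      ≤ ‖fderiv ℝ b x‖ * ‖(EuclideanSpace.single i (1:ℝ))‖ :=
                    (fderiv ℝ b x).le_opNorm _
                  rw [EuclideanSpace.norm_single, norm_one, mul_one] at h1
                  exact le_trans h1 (hBd x)
        _ = d * B := by simp [Finset.sum_const, Finset.card_univ, nsmul_eq_mul]
    have hbx : |⟪b x, x⟫| ≤ B * ‖x‖ :=
      le_trans (abs_real_inner_le_norm _ _) (mul_le_mul_of_nonneg_right (hBb x) (norm_nonneg x))
    have hbVx : ⟪b x, gradient V x⟫ ≤ c * g ^ 2 := hbV x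
    have hbsq : ‖b x‖ ^ 2 ≤ B ^ 2 := pow_le_pow_left₀ (norm_nonneg _) (hBb x) 2
    -- assemble
    have t1 : ε * (2 * θ * d + 4 * θ ^ 2 * ‖x‖ ^ 2)
        ≤ 2 * ε * θ * d + 4 * ε * θ ^ 2 * K ^ 2 * g ^ 2 := by
      have hxsq : ‖x‖ * ‖x‖ ≤ (K * g) * (K * g) :=
        mul_self_le_mul_self (norm_nonneg x) hxg
      have h := mul_le_mul_of_nonneg_left hxsq (show (0:ℝ) ≤ 4 * ε * θ ^ 2 by positivity)
      nlinarith only [h]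
    have t2 : 2 * θ * (1 - 2 * α) * ⟪b x, x⟫ ≤ 2 * θ * |1 - 2 * α| * B * K * g := by
      have h1 : (1 - 2 * α) * ⟪b x, x⟫ ≤ |1 - 2 * α| * (B * ‖x‖) := by
        calc (1 - 2 * α) * ⟪b x, x⟫ ≤ |(1 - 2 * α) * ⟪b x, x⟫| := le_abs_self _
          _ = |1 - 2 * α| * |⟪b x, x⟫| := abs_mul _ _
          _ ≤ |1 - 2 * α| * (B * ‖x‖) := mul_le_mul_of_nonneg_left hbx (abs_nonneg _)
      have h2 : B * ‖x‖ ≤ B * (K * g) := mul_le_mul_of_nonneg_left hxg hB0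
      have h3 : |1 - 2 * α| * (B * ‖x‖) ≤ |1 - 2 * α| * (B * (K * g)) :=
        mul_le_mul_of_nonneg_left h2 (abs_nonneg _)
      have h4 := mul_le_mul_of_nonneg_left (le_trans h1 h3) (show (0:ℝ) ≤ 2 * θ by linarith only [hθ0])
      nlinarith only [h4]
    have t3 : (1 / (2 * ε)) * ⟪b x, gradient V x⟫ ≤ (1 / (2 * ε)) * (c * g ^ 2) :=
      mul_le_mul_of_nonneg_left hbVx (by positivity)
    have t4 : -(α * (1 - α) / ε) * ‖b x‖ ^ 2 ≤ |α * (1 - α)| / ε * B ^ 2 := by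
      have h1 : -(α * (1 - α)) / ε ≤ |α * (1 - α)| / ε :=
        (div_le_div_iff_of_pos_right hε).mpr (neg_le_abs _)
      have h2 := mul_le_mul_of_nonneg_right h1 (sq_nonneg (‖b x‖))
      have h3 : |α * (1 - α)| / ε * ‖b x‖ ^ 2 ≤ |α * (1 - α)| / ε * B ^ 2 :=
        mul_le_mul_of_nonneg_left hbsq (by positivity)
      ring_nf at h2 h3 ⊢
      linarith only [h2, h3]
    have t6 : -α * diverg b x ≤ |α| * d * B := by
      have h1 : -α * diverg b x ≤ |α| * |diverg b x| := by
        rw [← abs_mul]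
        calc -α * diverg b x = -(α * diverg b x) := by ring
          _ ≤ |α * diverg b x| := neg_le_abs _
      have h2 : |α| * |diverg b x| ≤ |α| * (d * B) :=
        mul_le_mul_of_nonneg_left hdiv (abs_nonneg _)
      calc -α * diverg b x ≤ |α| * |diverg b x| := h1
        _ ≤ |α| * (d * B) := h2
        _ = |α| * d * B := (mul_assoc _ _ _).symm
    -- combine into quadratic bound in g
    have hquad : ε * (2 * θ * d + 4 * θ ^ 2 * ‖x‖ ^ 2) + 2 * θ * (1 - 2 * α) * ⟪b x, x⟫
        + Upot V b ε α x ≤ -m * g ^ 2 + L * g + M := by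
      unfold Upot
      rw [← hgdef]
      have key : -(1 / (4 * ε)) * g ^ 2 + (1 / (2 * ε)) * (c * g ^ 2)
          = -((1 - 2 * c) / (4 * ε)) * g ^ 2 := by field_simp; ring
      have h2m : (1 - 2 * c) / (4 * ε) = 2 * m := by rw [hmdef]; field_simp; ring
      have hco : 4 * ε * θ ^ 2 * K ^ 2 * g ^ 2 - (1 - 2 * c) / (4 * ε) * g ^ 2
          ≤ -m * g ^ 2 := by
        have h := mul_le_mul_of_nonneg_right hcoef (sq_nonneg g)
        rw [h2m]
        nlinarith only [h]
      have hlap2 : (1 / 2) * laplacian V x ≤ (d / 2) * g := by linarith only [hlap]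
      rw [hLdef, hMdef]
      have key1 := key.le
      have key2 := key.ge
      ring_nf at t1 t2 t3 t4 t6 hlap2 key1 key2 hco ⊢
      linarith only [t1, t2, t3, t4, t6, hlap2, key1, key2, hco]
    -- quadratic estimate
    have hfin : -m * g ^ 2 + L * g + M ≤ -1 := by
      have p1 := mul_le_mul_of_nonneg_right hg2 hg0
      have p2 := mul_le_mul_of_nonneg_left hg1 hL0
      have p3 := mul_le_mul_of_nonneg_left hg1 (show (0:ℝ) ≤ M + 2 by linarith only [hM0])
      nlinarith only [p1, p2, p3]
    linarith only [hquad, hfin]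
  -- continuity of everything
  have hVf1 : ContDiff ℝ (⊤ : ℕ∞) (fderiv ℝ V) := hA.smooth_V.fderiv_right (by simp)
  have hgradc : Continuous (gradient V) := by
    have h1 : Continuous (fderiv ℝ V) := hVf1.continuous
    exact (LinearIsometryEquiv.continuous _).comp h1
  have hhessc : Continuous (fderiv ℝ (fderiv ℝ V)) := by
    have h : ContDiff ℝ (⊤ : ℕ∞) (fderiv ℝ (fderiv ℝ V)) := hVf1.fderiv_right (by simp)
    exact h.continuous
  have hbc : Continuous b := hA.smooth_b.continuous
  have hdbc : Continuous (fderiv ℝ b) := by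
    have h : ContDiff ℝ (⊤ : ℕ∞) (fderiv ℝ b) := hA.smooth_b.fderiv_right (by simp)
    exact h.continuous
  have hlapc : Continuous (laplacian V) := by
    unfold laplacian
    exact continuous_finset_sum _ fun i _ =>
      (hhessc.clm_apply continuous_const).clm_apply continuous_const
  have hdivc : Continuous (diverg b) := by
    unfold diverg
    refine continuous_finset_sum _ fun i _ => ?_
    exact (EuclideanSpace.proj i).continuous.comp (hdbc.clm_apply continuous_const)
  have hUc : Continuous (Upot V b ε α) := by
    unfold Upot
    exact ((((continuous_const.mul (hgradc.norm.pow 2)).add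
      (continuous_const.mul (hbc.inner hgradc))).sub
      (continuous_const.mul (hbc.norm.pow 2))).add
      (continuous_const.mul hlapc)).sub (continuous_const.mul hdivc)
  have hFc : Continuous (fun x : EuclideanSpace ℝ (Fin d) =>
      (ε * (2 * θ * d + 4 * θ ^ 2 * ‖x‖ ^ 2) + 2 * θ * (1 - 2 * α) * ⟪b x, x⟫
        + Upot V b ε α x + 1) * Real.exp (θ * ‖x‖ ^ 2)) := by
    have hE : Continuous (fun x : EuclideanSpace ℝ (Fin d) =>
        ε * (2 * θ * d + 4 * θ ^ 2 * ‖x‖ ^ 2) + 2 * θ * (1 - 2 * α) * ⟪b x, x⟫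
          + Upot V b ε α x + 1) :=
      (((continuous_const.mul (continuous_const.add
          (continuous_const.mul (continuous_norm.pow 2)))).add
        (continuous_const.mul (hbc.inner continuous_id))).add hUc).add continuous_const
    exact hE.mul (Real.continuous_exp.comp (continuous_const.mul (continuous_norm.pow 2)))
  obtain ⟨C₀, hC₀⟩ := (isCompact_closedBall (0 : EuclideanSpace ℝ (Fin d)) R)
    |>.exists_bound_of_continuousOn hFc.continuousOn
  refine ⟨1, one_pos, max C₀ 0, le_max_right _ _, ?_⟩
  intro x
  have hexp : (0 : ℝ) < Real.exp (θ * ‖x‖ ^ 2) := Real.exp_pos _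
  by_cases hx : ‖x‖ ≤ R
  · have hmem : x ∈ Metric.closedBall (0 : EuclideanSpace ℝ (Fin d)) R := by
      simpa [Metric.mem_closedBall, dist_zero_right] using hx
    have h1 := hC₀ x hmem
    rw [Real.norm_eq_abs] at h1
    have h2 : (ε * (2 * θ * d + 4 * θ ^ 2 * ‖x‖ ^ 2) + 2 * θ * (1 - 2 * α) * ⟪b x, x⟫
        + Upot V b ε α x + 1) * Real.exp (θ * ‖x‖ ^ 2) ≤ C₀ := le_trans (le_abs_self _) h1
    have h3 : C₀ ≤ max C₀ 0 := le_max_left _ _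
    ring_nf at h2 ⊢
    nlinarith only [h2, h3, hexp]
  · push_neg at hx
    have h1 := hfar x hx.le
    have h2 := mul_le_mul_of_nonneg_right h1 hexp.le
    have h3 : (0:ℝ) ≤ max C₀ 0 := le_max_right _ _
    ring_nf at h2 ⊢
    nlinarith only [h2, h3, hexp]
end
end
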